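/- Let A ∈ SL(2,ℤ) with Tr(A) ≠ 2, p a prime, A ≢ I mod p, and Tr(A) ≡ 2 mod p. Then p does not divide A(1) = gcd(a-1,b,c,d-1) but p divides A(2) = |Tr(A)-2|/A(1). -/

import Mathlib

/-!
Write `g = A(1)` for the gcd of the entries of `A - 1`. If `p ∣ g` then `A ≡ 1 mod p`, so
`p ∤ g`. Since `g` divides the diagonal of `A - 1` it divides `Tr(A) - 2`, which `p` also divides;
as `p` is coprime to `g`, already `p g ∣ |Tr(A) - 2|`, i.e. `p ∣ A(2)`.
-/

theorem Matrix.map_intCast_eq_one_of_dvd_sub_one {ι : Type*} [DecidableEq ι] (n : ℕ)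
    (M : Matrix ι ι ℤ) (h : ∀ i j, (n : ℤ) ∣ (M - 1) i j) :
    M.map (Int.cast : ℤ → ZMod n) = 1 := by
  ext i j
  have hij := (ZMod.intCast_zmod_eq_zero_iff_dvd _ n).2 (h i j)
  rw [Matrix.sub_apply, Int.cast_sub, sub_eq_zero] at hij
  simpa [Matrix.one_apply, apply_ite] using hij

theorem Matrix.dvd_trace_of_dvd_diag {ι R : Type*} [Fintype ι] [CommSemiring R]
    (d : R) (M : Matrix ι ι R) (h : ∀ i, d ∣ M i i) : d ∣ M.trace :=
  Finset.dvd_sum fun i _ => h i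

theorem Matrix.trace_sub_one_fin_two {R : Type*} [AddCommGroupWithOne R]
    (M : Matrix (Fin 2) (Fin 2) R) : (M - 1).trace = M.trace - 2 := by
  rw [Matrix.trace_sub, Matrix.trace_one, Fintype.card_fin, Nat.cast_two]

theorem Matrix.gcd_dvd_sub_one_fin_two (M : Matrix (Fin 2) (Fin 2) ℤ) (i j : Fin 2) :
    (Int.gcd (Int.gcd (M 0 0 - 1) (M 0 1)) (Int.gcd (M 1 0) (M 1 1 - 1)) : ℤ) ∣
      (M - 1) i j := by
  set g : ℤ :=
    (Int.gcd (Int.gcd (M 0 0 - 1) (M 0 1)) (Int.gcd (M 1 0) (M 1 1 - 1)) : ℤ)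
  have h00 : g ∣ M 0 0 - 1 := dvd_trans (Int.gcd_dvd_left _ _) (Int.gcd_dvd_left _ _)
  have h01 : g ∣ M 0 1 := dvd_trans (Int.gcd_dvd_left _ _) (Int.gcd_dvd_right _ _)
  have h10 : g ∣ M 1 0 := dvd_trans (Int.gcd_dvd_right _ _) (Int.gcd_dvd_left _ _)
  have h11 : g ∣ M 1 1 - 1 := dvd_trans (Int.gcd_dvd_right _ _) (Int.gcd_dvd_right _ _)
  fin_cases i <;> fin_cases j
  · simpa using h00
  · simpa using h01
  · simpa using h10
  · simpa using h11

theorem Int.dvd_ediv_of_isCoprime {p g x : ℤ} (hpg : IsCoprime p g) (hg : g ∣ x)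
    (hp : p ∣ x) : p ∣ x / g :=
  Int.dvd_ediv_of_mul_dvd (hpg.symm.mul_dvd hg hp)

theorem stmt2_general (p : ℕ) (hp : p.Prime) (A : Matrix.SpecialLinearGroup (Fin 2) ℤ)
    (hA : (A.1.map (Int.cast : ℤ → ZMod p)) ≠ 1)
    (htrp : ((Matrix.trace A.1 : ℤ) : ZMod p) = 2) :
    ¬ (p : ℤ) ∣ (Int.gcd (Int.gcd (A.1 0 0 - 1) (A.1 0 1)) (Int.gcd (A.1 1 0) (A.1 1 1 - 1)) : ℤ) ∧
    (p : ℤ) ∣ |Matrix.trace A.1 - 2| /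
      (Int.gcd (Int.gcd (A.1 0 0 - 1) (A.1 0 1)) (Int.gcd (A.1 1 0) (A.1 1 1 - 1)) : ℤ) := by
  have hg := Matrix.gcd_dvd_sub_one_fin_two A.1
  have hpg : ¬ (p : ℤ) ∣ _ := fun h =>
    hA (Matrix.map_intCast_eq_one_of_dvd_sub_one p A.1 fun i j => h.trans (hg i j))
  have hg_tr :=
    Matrix.trace_sub_one_fin_two A.1 ▸ Matrix.dvd_trace_of_dvd_diag _ _ fun i => hg i i
  have hp_tr : (p : ℤ) ∣ Matrix.trace A.1 - 2 := by
    simpa using (ZMod.intCast_eq_intCast_iff_dvd_sub 2 _ p).1 (by simpa using htrp.symm)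
  exact ⟨hpg, Int.dvd_ediv_of_isCoprime ((Nat.prime_iff_prime_int.1 hp).coprime_iff_not_dvd.2 hpg)
    ((dvd_abs _ _).2 hg_tr) ((dvd_abs _ _).2 hp_tr)⟩

theorem stmt2 (p : ℕ) (hp : p.Prime) (A : Matrix.SpecialLinearGroup (Fin 2) ℤ)
    (htr : Matrix.trace A.1 ≠ 2)
    (hA : (A.1.map (Int.cast : ℤ → ZMod p)) ≠ 1)
    (htrp : ((Matrix.trace A.1 : ℤ) : ZMod p) = 2) :
    ¬ (p : ℤ) ∣ (Int.gcd (Int.gcd (A.1 0 0 - 1) (A.1 0 1)) (Int.gcd (A.1 1 0) (A.1 1 1 - 1)) : ℤ) ∧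
    (p : ℤ) ∣ |Matrix.trace A.1 - 2| /
      (Int.gcd (Int.gcd (A.1 0 0 - 1) (A.1 0 1)) (Int.gcd (A.1 1 0) (A.1 1 1 - 1)) : ℤ) :=
  stmt2_general p hp A hA htrp
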